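/- arXiv:2003.14236 — 3 statements merged into one kernel-verified Lean document; each statement's English description precedes it below -/
import Mathlib

section
/- The polynomial G_m = sum over j from 0 to m-1 of (x_1+y_1)···(x_1+y_j)·(x_2+y_{j+2})···(x_2+y_m) is symmetric under exchanging x_1 and x_2. -/
/-!
Write `G a b m` for the sum, with `a` on the left factors and `b` on the right ones, and `P_a m`
for `(a + y 1) ⋯ (a + y m)`. Splitting off the last index gives the recursion
`G a b (m+1) = (b + y (m+1)) G a b m + P_a m`, from which `(a - b) G a b m = P_a m - P_b m`
telescopes. Inserting the latter for `(b, a)` into the recursions for `G a b` and `G b a` shows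
that their difference satisfies `D (m+1) = (b + y (m+1)) D m`, so it vanishes since `D 0 = 0`.
-/

open Finset

namespace MixedSum

variable {R : Type*} [CommRing R] (y : ℕ → R)

def mixedSum (a b : R) (m : ℕ) : R :=
  ∑ j ∈ range m, (∏ i ∈ Icc 1 j, (a + y i)) * ∏ i ∈ Icc (j + 2) m, (b + y i)

theorem mixedSum_succ (a b : R) (m : ℕ) :
    mixedSum y a b (m + 1) = (b + y (m + 1)) * mixedSum y a b m + ∏ i ∈ Icc 1 m, (a + y i) := by
  have last_empty : Icc (m + 2) (m + 1) = ∅ := Icc_eq_empty (by omega)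
  rw [mixedSum, sum_range_succ, last_empty, prod_empty, mul_one, mixedSum, mul_sum]
  congr 1
  refine sum_congr rfl fun j hj => ?_
  rw [prod_Icc_succ_top (by simp at hj; omega)]
  ring

theorem sub_mul_mixedSum (a b : R) (m : ℕ) :
    (a - b) * mixedSum y a b m = ∏ i ∈ Icc 1 m, (a + y i) - ∏ i ∈ Icc 1 m, (b + y i) := by
  induction m with
  | zero => simp [mixedSum]
  | succ m ih =>
    rw [mixedSum_succ, prod_Icc_succ_top (by omega), prod_Icc_succ_top (by omega)]
    linear_combination (b + y (m + 1)) * ih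

theorem mixedSum_comm (a b : R) (m : ℕ) : mixedSum y a b m = mixedSum y b a m := by
  induction m with
  | zero => simp [mixedSum]
  | succ m ih =>
    rw [mixedSum_succ, mixedSum_succ, ih]
    linear_combination sub_mul_mixedSum y b a m

end MixedSum

/-- The polynomial `G_m = ∑_{j=0}^{m-1} (x_1+y_1)⋯(x_1+y_j)·(x_2+y_{j+2})⋯(x_2+y_m)` is
symmetric under exchanging `x_1` and `x_2`. -/
theorem stmt1 {R : Type*} [CommRing R] (m : ℕ) (x₁ x₂ : R) (y : ℕ → R) :
    (∑ j ∈ Finset.range m,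
        (∏ i ∈ Finset.Icc 1 j, (x₁ + y i)) * ∏ i ∈ Finset.Icc (j + 2) m, (x₂ + y i))
    = ∑ j ∈ Finset.range m,
        (∏ i ∈ Finset.Icc 1 j, (x₂ + y i)) * ∏ i ∈ Finset.Icc (j + 2) m, (x₁ + y i) :=
  MixedSum.mixedSum_comm y x₁ x₂ m
end

section
/- Let A = (2,1) and B = (1,m) with m ≥ 1, and consider all lattice paths γ from A to B in the 2×m grid using steps Up (decreasing the first coordinate) and Right (increasing the second coordinate). Define F_m(x_1, x_2 | y_1, ..., y_m) as the sum over such paths γ of the product over cells (i,j) on γ of 1/(x_i + y_j). Then F_m is a symmetric function of x_1 and x_2 (as a rational function in x_1, x_2, y_1, ..., y_m). -/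
open Finset

noncomputable section

/-- The field of rational functions over `ℚ` in variables `x_1, x_2, …` and `y_1, y_2, …`. -/
abbrev K : Type := FractionRing (MvPolynomial (ℕ ⊕ ℕ) ℚ)

/-- The variable `x_i` as an element of `K`. -/
def X (i : ℕ) : K := algebraMap (MvPolynomial (ℕ ⊕ ℕ) ℚ) K (MvPolynomial.X (Sum.inl i))

/-- The variable `y_j` as an element of `K`. -/
def Y (j : ℕ) : K := algebraMap (MvPolynomial (ℕ ⊕ ℕ) ℚ) K (MvPolynomial.X (Sum.inr j))

/-- A step of an Up-Right lattice path: `Up` decreases the first (row) coordinate by one,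
`Right` increases the second (column) coordinate by one. -/
def Step (c d : ℕ × ℕ) : Prop :=
  (d.1 + 1 = c.1 ∧ d.2 = c.2) ∨ (d.1 = c.1 ∧ d.2 = c.2 + 1)

/-- `p` is an Up-Right lattice path from cell `A` to cell `B` (listed as its sequence of
visited cells, starting at `A` and ending at `B`). -/
def IsPath (A B : ℕ × ℕ) (p : List (ℕ × ℕ)) : Prop :=
  p.Chain' Step ∧ p.head? = some A ∧ p.getLast? = some B

/-- All cells of `p` lie in the grid `{1,…,m} × {1,…,n}`. -/
def InGrid (m n : ℕ) (p : List (ℕ × ℕ)) : Prop :=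
  ∀ c ∈ p, 1 ≤ c.1 ∧ c.1 ≤ m ∧ 1 ≤ c.2 ∧ c.2 ≤ n

/-- The weight of a path: the product of `1/(x_i + y_j)` over all visited cells `(i,j)`. -/
def pathWeight (x y : ℕ → K) (p : List (ℕ × ℕ)) : K :=
  (p.map fun c => (x c.1 + y c.2)⁻¹).prod

/-- The single-path partition function: the sum of weights of all Up-Right lattice paths
from `A` to `B` inside the grid `{1,…,m} × {1,…,n}`. -/
def F1 (m n : ℕ) (x y : ℕ → K) (A B : ℕ × ℕ) : K :=
  ∑ᶠ p : {p : List (ℕ × ℕ) // IsPath A B p ∧ InGrid m n p}, pathWeight x y p.1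

/-- `γ` is a `k`-tuple of pairwise vertex-disjoint Up-Right lattice paths `γ i : A i → B i`
inside the grid `{1,…,m} × {1,…,n}`. -/
def IsTuple (m n k : ℕ) (A B : Fin k → ℕ × ℕ) (γ : Fin k → List (ℕ × ℕ)) : Prop :=
  (∀ i, IsPath (A i) (B i) (γ i) ∧ InGrid m n (γ i)) ∧
  (∀ i j, i ≠ j → ∀ c ∈ γ i, c ∉ γ j)

/-- The multi-path partition function: the sum, over all `k`-tuples of pairwise disjoint
Up-Right lattice paths `γ i : A i → B i` in the grid `{1,…,m} × {1,…,n}`, of the product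
of `1/(x_i + y_j)` over all visited cells. -/
def Ftuple (m n k : ℕ) (x y : ℕ → K) (A B : Fin k → ℕ × ℕ) : K :=
  ∑ᶠ γ : {γ : Fin k → List (ℕ × ℕ) // IsTuple m n k A B γ}, ∏ i, pathWeight x y (γ.1 i)

/-! A path from `(2, 1)` to `(1, m)` is a hook: it runs along row 2 up to some column `j`, steps up,
and runs along row 1 to column `m`. Writing `f i = 1/(x₂ + yᵢ)` and `g i = 1/(x₁ + yᵢ)`, the
partial fraction identity `(x₁ - x₂) f i g i = f i - g i` makes `(x₁ - x₂) F_m` telescope to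
`∏ f i - ∏ g i`, which is antisymmetric in `x₁, x₂`; hence `F_m` is symmetric. -/

/-- The cells `(i, a), (i, a + 1), …, (i, b - 1)`. -/
def rowSegment (i a b : ℕ) : List (ℕ × ℕ) := (List.range' a (b - a)).map (Prod.mk i)

lemma rowSegment_of_le {i a b : ℕ} (h : b ≤ a) : rowSegment i a b = [] := by
  simp [rowSegment, Nat.sub_eq_zero_of_le h]

lemma rowSegment_eq_cons {i a b : ℕ} (h : a < b) :
    rowSegment i a b = (i, a) :: rowSegment i (a + 1) b := by
  obtain ⟨n, rfl⟩ := Nat.exists_eq_add_of_lt h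
  simp [rowSegment, show a + n + 1 - a = n + 1 by omega, show a + n + 1 - (a + 1) = n by omega,
    List.range'_succ]

lemma getLast?_rowSegment {i a b : ℕ} (h : a < b) :
    (rowSegment i a b).getLast? = some (i, b - 1) := by
  simp [rowSegment, List.getLast?_range']
  omega

lemma isChain_rowSegment (i a b : ℕ) : (rowSegment i a b).IsChain Step := by
  rw [rowSegment, List.isChain_map]
  exact (List.isChain_range' a _ 1).imp fun c d h => Or.inr ⟨rfl, h⟩

lemma mem_rowSegment {i a b : ℕ} {d : ℕ × ℕ} :
    d ∈ rowSegment i a b ↔ d.1 = i ∧ a ≤ d.2 ∧ d.2 < b := by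
  obtain ⟨d1, d2⟩ := d
  simp only [rowSegment, List.mem_map, List.mem_range'_1, Prod.mk.injEq]
  constructor
  · rintro ⟨c, hc, rfl, rfl⟩
    omega
  · rintro ⟨rfl, h⟩
    exact ⟨d2, by omega, rfl, rfl⟩

lemma pathWeight_rowSegment (x y : ℕ → K) (i a b : ℕ) :
    pathWeight x y (rowSegment i a b) = ∏ c ∈ Ico a b, (x i + y c)⁻¹ := by
  simp [pathWeight, rowSegment, Nat.Ico_eq_range', Finset.prod_eq_multiset_prod, Function.comp_def]

def hookPath (c j M : ℕ) : List (ℕ × ℕ) := rowSegment 2 c (j + 1) ++ rowSegment 1 j (M + 1)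

lemma Step.fst_le {c d : ℕ × ℕ} (h : Step c d) : d.1 ≤ c.1 := by
  rcases h with ⟨h, -⟩ | ⟨h, -⟩ <;> omega

lemma fst_le_of_isChain {a b : ℕ × ℕ} {l : List (ℕ × ℕ)} (hl : (a :: l).IsChain Step)
    (hb : (a :: l).getLast? = some b) : b.1 ≤ a.1 := by
  have hab := List.relationReflTransGen_of_exists_isChain_cons l hl
    (Option.some_injective _ (by rw [← hb, List.getLast?_eq_some_getLast]))
  clear hb
  induction hab with
  | refl => exact le_rfl
  | tail _ hstep ih => exact hstep.fst_le.trans ih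

lemma eq_rowSegment_of_isChain {M : ℕ} {l : List (ℕ × ℕ)} :
    ∀ {c : ℕ}, ((1, c) :: l).IsChain Step → ((1, c) :: l).getLast? = some (1, M) →
      (1, c) :: l = rowSegment 1 c (M + 1) := by
  induction l with
  | nil =>
    intro c _ hb
    obtain rfl : c = M := by simpa using hb
    rw [rowSegment_eq_cons (Nat.lt_succ_self c), rowSegment_of_le le_rfl]
  | cons q t ih =>
    intro c hl hb
    rw [List.isChain_cons_cons] at hl
    rw [List.getLast?_cons_cons] at hb
    obtain ⟨q1, q2⟩ := q
    rcases hl.1 with ⟨hup, -⟩ | ⟨hrow, hright⟩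
    · have := fst_le_of_isChain hl.2 hb
      simp only at hup this
      omega
    · obtain rfl : q1 = 1 := hrow
      obtain rfl : q2 = c + 1 := hright
      have hseg := ih hl.2 hb
      have hlt := (mem_rowSegment.1 (hseg ▸ List.mem_cons_self)).2.2
      rw [rowSegment_eq_cons (by omega), ← hseg]

lemma exists_eq_hookPath_of_isChain {M : ℕ} {l : List (ℕ × ℕ)} :
    ∀ {c : ℕ}, ((2, c) :: l).IsChain Step → ((2, c) :: l).getLast? = some (1, M) →
      ∃ j, c ≤ j ∧ j ≤ M ∧ (2, c) :: l = hookPath c j M := by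
  induction l with
  | nil => simp
  | cons q t ih =>
    intro c hl hb
    rw [List.isChain_cons_cons] at hl
    rw [List.getLast?_cons_cons] at hb
    obtain ⟨q1, q2⟩ := q
    rcases hl.1 with ⟨hup, hcol⟩ | ⟨hrow, hright⟩
    · obtain rfl : q1 = 1 := by simp only at hup; omega
      obtain rfl : c = q2 := hcol.symm
      have hseg := eq_rowSegment_of_isChain hl.2 hb
      have hcM := (mem_rowSegment.1 (hseg ▸ List.mem_cons_self)).2.2
      refine ⟨c, le_rfl, by omega, ?_⟩
      rw [hookPath, hseg, rowSegment_eq_cons (Nat.lt_succ_self c), rowSegment_of_le le_rfl]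
      rfl
    · obtain rfl : q1 = 2 := hrow
      obtain rfl : q2 = c + 1 := hright
      obtain ⟨j, hcj, hjM, hhook⟩ := ih hl.2 hb
      refine ⟨j, by omega, hjM, ?_⟩
      rw [hookPath, rowSegment_eq_cons (by omega), List.cons_append, ← hookPath, ← hhook]

lemma isPath_hookPath {c j M : ℕ} (hcj : c ≤ j) (hjM : j ≤ M) :
    IsPath (2, c) (1, M) (hookPath c j M) := by
  refine ⟨?_, ?_, ?_⟩
  · refine List.isChain_append.2 ⟨isChain_rowSegment _ _ _, isChain_rowSegment _ _ _, ?_⟩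
    rw [getLast?_rowSegment (by omega), rowSegment_eq_cons (by omega : j < M + 1)]
    simp [Step]
  · simp [hookPath, rowSegment_eq_cons (show c < j + 1 by omega)]
  · rw [hookPath, List.getLast?_append, getLast?_rowSegment (by omega)]
    simp

lemma inGrid_hookPath {c j M : ℕ} (hc : 1 ≤ c) (hcj : c ≤ j) (hjM : j ≤ M) :
    InGrid 2 M (hookPath c j M) := by
  intro d hd
  simp only [hookPath, List.mem_append, mem_rowSegment] at hd
  omega

lemma hookPath_left_injective {c M j j' : ℕ} (hj : c ≤ j) (hj' : c ≤ j')
    (h : hookPath c j M = hookPath c j' M) : j = j' := by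
  have hmem : ∀ {k k'}, c ≤ k → (2, k) ∈ hookPath c k' M → k ≤ k' := by
    intro k k' hk hmem
    simp [hookPath, mem_rowSegment] at hmem
    omega
  have hself : ∀ {k}, c ≤ k → (2, k) ∈ hookPath c k M := by
    intro k hk
    simp [hookPath, mem_rowSegment, hk]
  exact le_antisymm (hmem hj (h ▸ hself hj)) (hmem hj' (h ▸ hself hj'))

lemma exists_eq_hookPath_of_isPath {c M : ℕ} {p : List (ℕ × ℕ)}
    (hp : IsPath (2, c) (1, M) p) :
    ∃ j, c ≤ j ∧ j ≤ M ∧ p = hookPath c j M := by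
  obtain ⟨hchain, hhead, hlast⟩ := hp
  cases p with
  | nil => simp at hhead
  | cons a l =>
    obtain rfl : a = (2, c) := by simpa using hhead
    exact exists_eq_hookPath_of_isChain hchain hlast

lemma pathWeight_hookPath (x y : ℕ → K) (c j M : ℕ) :
    pathWeight x y (hookPath c j M) =
      (∏ i ∈ Ico c (j + 1), (x 2 + y i)⁻¹) * ∏ i ∈ Ico j (M + 1), (x 1 + y i)⁻¹ := by
  rw [← pathWeight_rowSegment, ← pathWeight_rowSegment, hookPath, pathWeight, List.map_append,
    List.prod_append]
  rfl

def hookPathEquiv (m : ℕ) :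
    Ico 1 (m + 1) ≃ {p : List (ℕ × ℕ) // IsPath (2, 1) (1, m) p ∧ InGrid 2 m p} :=
  Equiv.ofBijective
    (fun j => ⟨hookPath 1 j m,
      isPath_hookPath (mem_Ico.1 j.2).1 (Nat.lt_succ_iff.1 (mem_Ico.1 j.2).2),
      inGrid_hookPath le_rfl (mem_Ico.1 j.2).1 (Nat.lt_succ_iff.1 (mem_Ico.1 j.2).2)⟩)
    ⟨fun j j' h => Subtype.ext <| hookPath_left_injective (mem_Ico.1 j.2).1 (mem_Ico.1 j'.2).1
        (congrArg Subtype.val h),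
      fun ⟨_, hp, _⟩ =>
        let ⟨j, h1j, hjm, hp⟩ := exists_eq_hookPath_of_isPath hp
        ⟨⟨j, mem_Ico.2 ⟨h1j, Nat.lt_succ_of_le hjm⟩⟩, Subtype.ext hp.symm⟩⟩

lemma F1_eq_sum (x y : ℕ → K) (m : ℕ) :
    F1 2 m x y (2, 1) (1, m) = ∑ j ∈ Ico 1 (m + 1),
      (∏ i ∈ Ico 1 (j + 1), (x 2 + y i)⁻¹) * ∏ i ∈ Ico j (m + 1), (x 1 + y i)⁻¹ := by
  rw [F1, ← finsum_comp_equiv (hookPathEquiv m), finsum_eq_sum_of_fintype,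
    ← sum_coe_sort (Ico 1 (m + 1))]
  exact Fintype.sum_congr _ _ fun j => pathWeight_hookPath x y 1 j m

lemma mul_sum_prod_Ico_mul_prod_Ico {R : Type*} [CommRing R] (f g : ℕ → R) (c : R)
    (hfg : ∀ i, c * f i * g i = f i - g i) {a b : ℕ} (hab : a ≤ b) :
    c * ∑ j ∈ Ico a b, (∏ i ∈ Ico a (j + 1), f i) * ∏ i ∈ Ico j b, g i =
      ∏ i ∈ Ico a b, f i - ∏ i ∈ Ico a b, g i := by
  set Q : ℕ → R := fun j => (∏ i ∈ Ico a j, f i) * ∏ i ∈ Ico j b, g i with hQ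
  have hstep : ∀ j ∈ Ico a b,
      c * ((∏ i ∈ Ico a (j + 1), f i) * ∏ i ∈ Ico j b, g i) = Q (j + 1) - Q j := by
    intro j hj
    obtain ⟨haj, hjb⟩ := mem_Ico.1 hj
    simp only [hQ, prod_Ico_succ_top haj, prod_eq_prod_Ico_succ_bot hjb]
    linear_combination (∏ i ∈ Ico a j, f i) * (∏ i ∈ Ico (j + 1) b, g i) * hfg j
  rw [mul_sum, sum_congr rfl hstep, sum_Ico_sub Q hab]
  simp [hQ]

lemma X_add_Y_ne_zero (i j : ℕ) : X i + Y j ≠ 0 := by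
  rw [X, Y, ← map_add, Ne, IsFractionRing.to_map_eq_zero_iff]
  intro h
  simpa using congrArg (MvPolynomial.eval fun s => if s = Sum.inl i then (1 : ℚ) else 0) h

lemma X_injective : Function.Injective X := fun _ _ h =>
  Sum.inl_injective (MvPolynomial.X_injective (IsFractionRing.injective _ K h))

lemma sub_mul_F1 (x y : ℕ → K) (hx₁ : ∀ j, x 1 + y j ≠ 0) (hx₂ : ∀ j, x 2 + y j ≠ 0)
    (m : ℕ) :
    (x 1 - x 2) * F1 2 m x y (2, 1) (1, m) =
      ∏ i ∈ Ico 1 (m + 1), (x 2 + y i)⁻¹ - ∏ i ∈ Ico 1 (m + 1), (x 1 + y i)⁻¹ := by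
  rw [F1_eq_sum]
  refine mul_sum_prod_Ico_mul_prod_Ico _ _ _ (fun i => ?_) (by omega)
  field_simp [hx₁ i, hx₂ i]
  ring

theorem stmt2_general (m : ℕ) :
    F1 2 m (fun i => X (Equiv.swap 1 2 i)) Y (2, 1) (1, m) = F1 2 m X Y (2, 1) (1, m) := by
  have hswap := sub_mul_F1 (fun i => X (Equiv.swap 1 2 i)) Y (fun j => X_add_Y_ne_zero _ j)
    (fun j => X_add_Y_ne_zero _ j) m
  simp only [Equiv.swap_apply_left, Equiv.swap_apply_right] at hswap
  have hid := sub_mul_F1 X Y (X_add_Y_ne_zero 1) (X_add_Y_ne_zero 2) m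
  refine mul_left_cancel₀ (sub_ne_zero.2 (X_injective.ne (by decide : (1 : ℕ) ≠ 2))) ?_
  linear_combination -hswap - hid

/-- `F_m(x_1,x_2 | y_1,…,y_m)`, the weighted sum over Up-Right lattice paths from `(2,1)`
to `(1,m)` in the grid `{1,2} × {1,…,m}` of `∏ 1/(x_i+y_j)` over visited cells, is
symmetric in `x_1` and `x_2`. -/
theorem stmt2 (m : ℕ) (hm : 1 ≤ m) :
    F1 2 m (fun i => X (Equiv.swap 1 2 i)) Y (2, 1) (1, m) = F1 2 m X Y (2, 1) (1, m) :=
  stmt2_general m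
end
end

section
/- With Q_{s,k}(t) the degree-< k representative of ∏_{j=s}^m 1/(x_j − t) modulo P_k(t) = (t+y_1)···(t+y_k), one has the polynomial identity (x_s + y_k) · Q_{s,k}(t) = Q_{s+1,k}(t) + (t + y_k) · Q_{s,k−1}(t) for all 1 ≤ s ≤ m and 2 ≤ k ≤ n, where Q_{m+1,k}(t) is interpreted as the representative of the empty product, i.e. the degree-< k representative of 1. -/
open Finset

noncomputable section

/-! Let `D = (x_s + y_k) Q_{s,k} − Q_{s+1,k} − (t + y_k) Q_{s,k−1}`; it has degree `< k`.
Since `∏_{j ≥ s} (x_j − t) = (x_s − t) ∏_{j > s} (x_j − t)` and `P_k = P_{k−1} (t + y_k)`,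
the product `D · ∏_{j ≥ s} (x_j − t)` is a combination of the three defining congruences
(the constants cancel because `(x_s + y_k) − (x_s − t) − (t + y_k) = 0`), hence divisible by
`P_k`. The product is invertible modulo `P_k`, so `P_k ∣ D`, and `D = 0` because `P_k` is
monic of degree `k`. -/

section Recurrence

open Polynomial

variable {R : Type*} [CommRing R]

theorem isCoprime_of_dvd_mul_sub_one {a b c : R} (h : a ∣ b * c - 1) : IsCoprime a c := by
  obtain ⟨d, hd⟩ := h
  exact ⟨-d, b, by linear_combination hd⟩

theorem Polynomial.monic_prod_X_add_C {ι : Type*} (y : ι → R) (S : Finset ι) :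
    (∏ j ∈ S, (X + C (y j))).Monic :=
  monic_prod_of_monic _ _ fun j _ => monic_X_add_C (y j)

variable [Nontrivial R]

theorem Polynomial.degree_prod_X_add_C {ι : Type*} (y : ι → R) (S : Finset ι) :
    (∏ j ∈ S, (X + C (y j))).degree = (#S : WithBot ℕ) := by
  rw [degree_prod_of_monic _ _ fun j _ => monic_X_add_C (y j)]
  simp [degree_X_add_C]

theorem Polynomial.degree_X_add_C_mul_lt_degree_mul {P Q : R[X]} (b : R)
    (hQ : Q.degree < P.degree) : ((X + C b) * Q).degree < (P * (X + C b)).degree := by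
  rw [mul_comm, (monic_X_add_C b).degree_mul, (monic_X_add_C b).degree_mul]
  exact WithBot.add_lt_add_right (by simp) hQ

theorem Polynomial.C_add_mul_eq_add_X_add_C_mul {P F Q₁ Q₂ Q₃ : R[X]} {a b : R} (hP : P.Monic)
    (hdeg₁ : Q₁.degree < (P * (X + C b)).degree)
    (hQ₁ : P * (X + C b) ∣ Q₁ * ((C a - X) * F) - 1)
    (hdeg₂ : Q₂.degree < (P * (X + C b)).degree)
    (hQ₂ : P * (X + C b) ∣ Q₂ * F - 1)
    (hdeg₃ : Q₃.degree < P.degree)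
    (hQ₃ : P ∣ Q₃ * ((C a - X) * F) - 1) :
    C (a + b) * Q₁ = Q₂ + (X + C b) * Q₃ := by
  set D := C (a + b) * Q₁ - Q₂ - (X + C b) * Q₃ with hD_def
  have hDF : P * (X + C b) ∣ D * ((C a - X) * F) := by
    have h : D * ((C a - X) * F) = C (a + b) * (Q₁ * ((C a - X) * F) - 1)
        - (C a - X) * (Q₂ * F - 1) - (X + C b) * (Q₃ * ((C a - X) * F) - 1) := by
      rw [hD_def, C_add]; ring
    rw [h]
    refine dvd_sub (dvd_sub (hQ₁.mul_left _) (hQ₂.mul_left _)) ?_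
    rw [mul_comm P]
    exact mul_dvd_mul_left _ hQ₃
  have hD : P * (X + C b) ∣ D := (isCoprime_of_dvd_mul_sub_one hQ₁).dvd_of_dvd_mul_right hDF
  have hC : (C (a + b) * Q₁).degree < (P * (X + C b)).degree :=
    (degree_mul_le _ _).trans_lt <| (add_le_add_left degree_C_le _).trans_lt (by rwa [zero_add])
  have hDdeg : D.degree < (P * (X + C b)).degree :=
    (degree_sub_le _ _).trans_lt <| max_lt ((degree_sub_le _ _).trans_lt (max_lt hC hdeg₂))
      (degree_X_add_C_mul_lt_degree_mul b hdeg₃)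
  have hD0 : D = 0 := by_contra fun hD0 ↦
    (hP.mul (monic_X_add_C b)).not_dvd_of_degree_lt hD0 hDdeg hD
  rw [hD_def] at hD0
  linear_combination hD0

end Recurrence

theorem stmt11_general (m s k : ℕ) (hsm : s ≤ m) (hk : 2 ≤ k)
    (Q₁ Q₂ Q₃ : Polynomial K)
    (hdeg₁ : Q₁.degree < (k : ℕ))
    (hQ₁ : (∏ j ∈ Finset.Icc 1 k, (Polynomial.X + Polynomial.C (Y j))) ∣
        Q₁ * (∏ j ∈ Finset.Icc s m, (Polynomial.C (X j) - Polynomial.X)) - 1)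
    (hdeg₂ : Q₂.degree < (k : ℕ))
    (hQ₂ : (∏ j ∈ Finset.Icc 1 k, (Polynomial.X + Polynomial.C (Y j))) ∣
        Q₂ * (∏ j ∈ Finset.Icc (s + 1) m, (Polynomial.C (X j) - Polynomial.X)) - 1)
    (hdeg₃ : Q₃.degree < ((k - 1 : ℕ) : ℕ))
    (hQ₃ : (∏ j ∈ Finset.Icc 1 (k - 1), (Polynomial.X + Polynomial.C (Y j))) ∣
        Q₃ * (∏ j ∈ Finset.Icc s m, (Polynomial.C (X j) - Polynomial.X)) - 1) :
    Polynomial.C (X s + Y k) * Q₁ = Q₂ + (Polynomial.X + Polynomial.C (Y k)) * Q₃ := by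
  obtain ⟨k, rfl⟩ : ∃ k', k = k' + 1 := ⟨k - 1, by omega⟩
  rw [Nat.add_sub_cancel] at hdeg₃ hQ₃
  have hP :=
    prod_Icc_succ_top (show 1 ≤ k + 1 by omega) fun j ↦ Polynomial.X + Polynomial.C (Y j)
  have hF := (insert_Icc_add_one_left_eq_Icc hsm).symm ▸
    prod_insert (f := fun j ↦ Polynomial.C (X j) - Polynomial.X) (s := Icc (s + 1) m) (by simp)
  have hdeg (n : ℕ) :
      (∏ j ∈ Icc 1 n, (Polynomial.X + Polynomial.C (Y j))).degree = (n : WithBot ℕ) := by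
    rw [Polynomial.degree_prod_X_add_C, Nat.card_Icc, Nat.add_sub_cancel]
  rw [← hdeg, hP] at hdeg₁ hdeg₂
  rw [← hdeg] at hdeg₃
  rw [hP] at hQ₁ hQ₂
  rw [hF] at hQ₁ hQ₃
  exact Polynomial.C_add_mul_eq_add_X_add_C_mul (Polynomial.monic_prod_X_add_C Y (Icc 1 k))
    hdeg₁ hQ₁ hdeg₂ hQ₂ hdeg₃ hQ₃

/-- With `Q_{s,k}` the degree-`< k` representative of `∏_{j=s}^m 1/(x_j − t)` modulo
`P_k(t) = (t+y_1)⋯(t+y_k)` (an empty product, for `s = m+1`, being `1`), one has the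
polynomial identity
`(x_s + y_k)·Q_{s,k}(t) = Q_{s+1,k}(t) + (t+y_k)·Q_{s,k−1}(t)` for `1 ≤ s ≤ m`,
`2 ≤ k ≤ n`. -/
theorem stmt11 (m n s k : ℕ) (hs : 1 ≤ s) (hsm : s ≤ m) (hk : 2 ≤ k) (hkn : k ≤ n)
    (Q₁ Q₂ Q₃ : Polynomial K)
    (hdeg₁ : Q₁.degree < (k : ℕ))
    (hQ₁ : (∏ j ∈ Finset.Icc 1 k, (Polynomial.X + Polynomial.C (Y j))) ∣
        Q₁ * (∏ j ∈ Finset.Icc s m, (Polynomial.C (X j) - Polynomial.X)) - 1)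
    (hdeg₂ : Q₂.degree < (k : ℕ))
    (hQ₂ : (∏ j ∈ Finset.Icc 1 k, (Polynomial.X + Polynomial.C (Y j))) ∣
        Q₂ * (∏ j ∈ Finset.Icc (s + 1) m, (Polynomial.C (X j) - Polynomial.X)) - 1)
    (hdeg₃ : Q₃.degree < ((k - 1 : ℕ) : ℕ))
    (hQ₃ : (∏ j ∈ Finset.Icc 1 (k - 1), (Polynomial.X + Polynomial.C (Y j))) ∣
        Q₃ * (∏ j ∈ Finset.Icc s m, (Polynomial.C (X j) - Polynomial.X)) - 1) :
    Polynomial.C (X s + Y k) * Q₁ = Q₂ + (Polynomial.X + Polynomial.C (Y k)) * Q₃ :=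
  stmt11_general m s k hsm hk Q₁ Q₂ Q₃ hdeg₁ hQ₁ hdeg₂ hQ₂ hdeg₃ hQ₃
end
end
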